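/- arXiv:2104.13068 — 6 statements merged into one kernel-verified Lean document; each statement's English description precedes it below -/
import Mathlib

section
/- A pair of non-increasing sequences of nonnegative integers (P;Q) with P = (p_1,...,p_m) and Q = (q_1,...,q_n) is bigraphic (i.e., there exists a bipartite graph with partite sets X = {x_1,...,x_m}, Y = {y_1,...,y_n} such that deg(x_i) = p_i and deg(y_j) = q_j) if and only if the sums agree, i.e., Σ_{i=1}^m p_i = Σ_{i=1}^n q_i, and for each r with 1 ≤ r ≤ n, Σ_{i=1}^r q_i ≤ Σ_{i=1}^m min{p_i, r}. -/
/-!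
Necessity is double counting: the edges at the first `r` vertices of `Y` number
`q_1 + ⋯ + q_r`, and `x_i` sends at most `min p_i r` of them.

Sufficiency is by induction on `n`. The last vertex `y_n` has the smallest degree `c = q_n`;
join it to `c` vertices of `X` of largest degree (there are at least `c` of positive degree,
by the condition at `r = 1`) and lower their degrees by one. At each `r` this lowers
`∑ min p_i r` by the number `k` of chosen `x_i` with `p_i ≤ r`. If `k > 0`, every `x_j` with
`p_j > r` was chosen, so the condition at `r + 1`, together with `q_{r+1} ≥ c`, absorbs the loss.
-/

open Finset

/-- `Bigraphic p q`: there is a simple bipartite graph with parts of sizes `m` and `n`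
whose degree sequences on the two parts are `p` and `q`, encoded via a 0/1
biadjacency matrix. -/
def Bigraphic {m n : ℕ} (p : Fin m → ℕ) (q : Fin n → ℕ) : Prop :=
  ∃ M : Fin m → Fin n → Bool,
    (∀ i, (∑ j, if M i j then 1 else 0) = p i) ∧
    (∀ j, (∑ i, if M i j then 1 else 0) = q j)

section

variable {ι : Type*} [Fintype ι]

lemma exists_card_eq_forall_mem_notMem_le [DecidableEq ι] {α : Type*} [LinearOrder α]
    (f : ι → α) {c : ℕ} (hc : c ≤ Fintype.card ι) :
    ∃ S : Finset ι, #S = c ∧ ∀ i ∈ S, ∀ j ∉ S, f j ≤ f i := by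
  induction c with
  | zero => exact ⟨∅, by simp, by simp⟩
  | succ c ih =>
    obtain ⟨S, hcard, htop⟩ := ih (by omega)
    have hSc : Sᶜ.Nonempty := by
      rw [← card_pos, card_compl]
      omega
    obtain ⟨k, hkS, hkmax⟩ := exists_max_image Sᶜ f hSc
    rw [mem_compl] at hkS
    refine ⟨insert k S, by rw [card_insert_of_notMem hkS, hcard], ?_⟩
    intro i hi j hj
    rw [mem_insert, not_or] at hj
    rcases mem_insert.mp hi with rfl | hi
    · exact hkmax j (mem_compl.mpr hj.2)
    · exact htop i hi j hj.2

lemma pos_of_mem_of_card_le_card_pos [DecidableEq ι] {f : ι → ℕ} {S : Finset ι}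
    (htop : ∀ i ∈ S, ∀ j ∉ S, f j ≤ f i) (hcard : #S ≤ #{i | 0 < f i}) :
    ∀ i ∈ S, 0 < f i := by
  intro i hi
  by_contra hfi
  have hsub : ({j | 0 < f j} : Finset ι) ⊆ S.erase i := by
    intro j hj
    rw [mem_filter_univ] at hj
    rw [mem_erase]
    refine ⟨by rintro rfl; exact hfi hj, ?_⟩
    by_contra hjS
    exact hfi (hj.trans_le (htop i hi j hjS))
  have := card_le_card hsub
  rw [card_erase_of_mem hi] at this
  have := card_pos.mpr ⟨i, hi⟩
  omega

lemma sum_min_succ (f : ι → ℕ) (r : ℕ) :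
    ∑ i, min (f i) (r + 1) = ∑ i, min (f i) r + #{i | r < f i} := by
  rw [card_filter, ← sum_add_distrib]
  refine sum_congr rfl fun i _ => ?_
  split_ifs <;> omega

lemma sum_min_eq_sum_min_add_card [DecidableEq ι] {f g : ι → ℕ} {S : Finset ι}
    (h : ∀ i, f i = g i + if i ∈ S then 1 else 0) (r : ℕ) :
    ∑ i, min (f i) r = ∑ i, min (g i) r + #{i ∈ S | f i ≤ r} := by
  rw [← filter_univ_mem S, filter_filter, card_filter, ← sum_add_distrib]
  refine sum_congr rfl fun i _ => ?_
  have hi := h i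
  by_cases hS : i ∈ S <;> simp only [hS, true_and, false_and, if_true, if_false] at hi ⊢
  · split_ifs <;> omega
  · omega

end

section PrefixSum

variable {n : ℕ}

def prefixSum (q : Fin n → ℕ) (r : ℕ) : ℕ :=
  ∑ j : Fin n, if (j : ℕ) < r then q j else 0

lemma prefixSum_zero (q : Fin n → ℕ) : prefixSum q 0 = 0 := by
  simp [prefixSum]

lemma prefixSum_succ (q : Fin n → ℕ) {r : ℕ} (hr : r < n) :
    prefixSum q (r + 1) = prefixSum q r + q ⟨r, hr⟩ := by
  rw [prefixSum, prefixSum, ← Fintype.sum_ite_eq' (⟨r, hr⟩ : Fin n) q, ← sum_add_distrib]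
  refine sum_congr rfl fun j _ => ?_
  simp only [Fin.ext_iff]
  split_ifs <;> omega

lemma prefixSum_init (q : Fin (n + 1) → ℕ) {r : ℕ} (hr : r ≤ n) :
    prefixSum (Fin.init q) r = prefixSum q r := by
  rw [prefixSum, prefixSum, Fin.sum_univ_castSucc]
  simp [Fin.init, hr]

end PrefixSum

def GaleRyserCondition {m n : ℕ} (p : Fin m → ℕ) (q : Fin n → ℕ) : Prop :=
  ∀ r : ℕ, 1 ≤ r → r ≤ n → prefixSum q r ≤ ∑ i, min (p i) r

namespace Bigraphic

variable {m n : ℕ} {p : Fin m → ℕ} {q : Fin n → ℕ}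

lemma sum_eq (h : Bigraphic p q) : ∑ i, p i = ∑ j, q j := by
  obtain ⟨M, hrow, hcol⟩ := h
  simp only [← hrow, ← hcol]
  exact sum_comm

lemma prefixSum_le (h : Bigraphic p q) (r : ℕ) : prefixSum q r ≤ ∑ i, min (p i) r := by
  obtain ⟨M, hrow, hcol⟩ := h
  calc prefixSum q r = ∑ i, #{j : Fin n | (j : ℕ) < r ∧ M i j} := by
        simp only [prefixSum, card_filter, ← hcol, ite_and]
        rw [sum_comm]
        exact sum_congr rfl fun j _ => by split_ifs <;> simp
    _ ≤ ∑ i, min (p i) r := sum_le_sum fun i _ => le_min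
          ((card_le_card (monotone_filter_right _ fun _ _ hj => hj.2)).trans_eq
            (by rw [← hrow i, card_filter]))
          ((card_le_card (monotone_filter_right _ fun _ _ hj => hj.1)).trans
            (Fin.card_filter_val_lt.trans_le (min_le_right _ _)))

lemma galeRyserCondition (h : Bigraphic p q) : GaleRyserCondition p q :=
  fun r _ _ => h.prefixSum_le r

lemma snoc {p' : Fin m → ℕ} (h : Bigraphic p' q) (S : Finset (Fin m))
    (hp : ∀ i, p i = p' i + if i ∈ S then 1 else 0) :
    Bigraphic p (Fin.snoc q #S : Fin (n + 1) → ℕ) := by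
  obtain ⟨M, hrow, hcol⟩ := h
  refine ⟨fun i => Fin.snoc (α := fun _ => Bool) (M i) (decide (i ∈ S)), fun i => ?_, fun j => ?_⟩
  · rw [hp, ← hrow, Fin.sum_univ_castSucc]
    simp
  · induction j using Fin.lastCases with
    | last => simp
    | cast j => simpa using hcol j

end Bigraphic

lemma GaleRyserCondition.init {m n : ℕ} {p p' : Fin m → ℕ} {q : Fin (n + 1) → ℕ}
    (hq : Antitone q) (h : GaleRyserCondition p q) {S : Finset (Fin m)}
    (hcard : #S = q (Fin.last n)) (htop : ∀ i ∈ S, ∀ j ∉ S, p j ≤ p i)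
    (hp : ∀ i, p i = p' i + if i ∈ S then 1 else 0) :
    GaleRyserCondition p' (Fin.init q) := by
  intro r hr1 hrn
  rw [prefixSum_init q hrn]
  have hloss := sum_min_eq_sum_min_add_card hp r
  rcases Nat.eq_zero_or_pos #{i ∈ S | p i ≤ r} with hk | hk
  · have := h r hr1 (by omega)
    omega
  obtain ⟨i₀, hi₀⟩ := card_pos.mp hk
  rw [mem_filter] at hi₀
  have hbig : ({i | r < p i} : Finset (Fin m)) = {i ∈ S | r < p i} := by
    ext i
    simp only [mem_filter, mem_univ, true_and, iff_and_self]
    intro hi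
    by_contra hiS
    exact (htop i₀ hi₀.1 i hiS).not_gt (hi₀.2.trans_lt hi)
  have hsplit := card_filter_add_card_filter_not (s := S) (fun i => r < p i)
  simp only [not_lt] at hsplit
  have hnext := h (r + 1) (by omega) (by omega)
  rw [prefixSum_succ q (by omega), sum_min_succ, hbig] at hnext
  have hqr : q (Fin.last n) ≤ q ⟨r, by omega⟩ := hq (Fin.le_last _)
  omega

theorem Bigraphic.of_galeRyserCondition {m : ℕ} :
    ∀ {n : ℕ} {p : Fin m → ℕ} {q : Fin n → ℕ}, Antitone q → ∑ i, p i = ∑ j, q j →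
      GaleRyserCondition p q → Bigraphic p q
  | 0, p, _, _, hsum, _ =>
    ⟨fun _ => Fin.elim0, fun i => by simpa using (sum_eq_zero_iff.mp hsum i (mem_univ i)).symm,
      fun j => j.elim0⟩
  | n + 1, p, q, hq, hsum, h => by
    have hpos : q (Fin.last n) ≤ #{i | 0 < p i} := by
      have h1 := h 1 le_rfl (by omega)
      have hmin := sum_min_succ p 0
      rw [prefixSum_succ q (by omega), prefixSum_zero] at h1
      simp only [zero_add, Nat.min_zero, sum_const_zero] at h1 hmin
      exact (hq (Fin.zero_le _)).trans (h1.trans_eq hmin)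
    obtain ⟨S, hcard, htop⟩ :=
      exists_card_eq_forall_mem_notMem_le p (hpos.trans (card_le_univ _))
    have hSpos := pos_of_mem_of_card_le_card_pos htop (hcard ▸ hpos)
    obtain ⟨p', hp⟩ : ∃ p' : Fin m → ℕ, ∀ i, p i = p' i + if i ∈ S then 1 else 0 :=
      ⟨fun i => p i - if i ∈ S then 1 else 0, fun i => by
        by_cases hi : i ∈ S
        · have := hSpos i hi
          simp only [hi, if_true]
          omega
        · simp only [hi, if_false, add_zero, Nat.sub_zero]⟩
    have hsum' : ∑ i, p' i = ∑ j, Fin.init q j := by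
      have hp_sum : ∑ i, p i = ∑ i, p' i + #S := by
        rw [sum_congr rfl fun i _ => hp i, sum_add_distrib, sum_boole, filter_univ_mem]
        simp
      have hq_sum := Fin.sum_univ_castSucc q
      simp only [Fin.init] at hq_sum ⊢
      omega
    have hq' : Antitone (Fin.init q) := fun a b hab => hq (Fin.castSucc_le_castSucc_iff.mpr hab)
    have := (of_galeRyserCondition hq' hsum' (h.init hq hcard htop hp)).snoc S hp
    rwa [hcard, Fin.snoc_init_self] at this

theorem gale_ryser_general {m n : ℕ} (p : Fin m → ℕ) (q : Fin n → ℕ)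
    (hq : Antitone q) :
    Bigraphic p q ↔
      ((∑ i, p i) = ∑ j, q j ∧
        ∀ r : ℕ, 1 ≤ r → r ≤ n →
          (∑ j : Fin n, if (j : ℕ) < r then q j else 0) ≤ ∑ i : Fin m, min (p i) r) :=
  ⟨fun h => ⟨h.sum_eq, h.galeRyserCondition⟩,
    fun ⟨hsum, h⟩ => Bigraphic.of_galeRyserCondition hq hsum h⟩

/-- Gale–Ryser theorem. -/
theorem gale_ryser {m n : ℕ} (p : Fin m → ℕ) (q : Fin n → ℕ)
    (hp : Antitone p) (hq : Antitone q) :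
    Bigraphic p q ↔
      ((∑ i, p i) = ∑ j, q j ∧
        ∀ r : ℕ, 1 ≤ r → r ≤ n →
          (∑ j : Fin n, if (j : ℕ) < r then q j else 0) ≤ ∑ i : Fin m, min (p i) r) :=
  gale_ryser_general p q hq
end

section
/- Let L1 = ([a_1,b_1],...,[a_m,b_m]) and L2 = ([c_1,d_1],...,[c_n,d_n]) be two sequences of intervals of nonnegative integers with a_1 ≥ ... ≥ a_m and c_1 ≥ ... ≥ c_n. Then (L1;L2) is bigraphic (i.e., there exists a bipartite graph G with parts X = {x_1,...,x_m}, Y = {y_1,...,y_n} satisfying a_i ≤ deg(x_i) ≤ b_i and c_j ≤ deg(y_j) ≤ d_j) if and only if for each t with 1 ≤ t ≤ n, Σ_{i=1}^t c_i ≤ Σ_{j=1}^m min{b_j, t}, and for each s with 1 ≤ s ≤ m, Σ_{i=1}^s a_i ≤ Σ_{j=1}^n min{d_j, s}. -/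
open Finset

/-- IntervalBigraphic a b c d : there is a simple bipartite graph whose degree of the
i-th vertex in the first part lies in [a i, b i] and of the j-th vertex in the
second part lies in [c j, d j]. -/
def IntervalBigraphic {m n : ℕ} (a b : Fin m → ℕ) (c d : Fin n → ℕ) : Prop :=
  ∃ M : Fin m → Fin n → Bool,
    (∀ i, a i ≤ (∑ j, if M i j then 1 else 0) ∧ (∑ j, if M i j then 1 else 0) ≤ b i) ∧
    (∀ j, c j ≤ (∑ i, if M i j then 1 else 0) ∧ (∑ i, if M i j then 1 else 0) ≤ d j)

/-!
Necessity is double counting. For sufficiency, take a biadjacency matrix within the upper bounds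
that maximises the coverage `∑ i, min (deg xᵢ) aᵢ + ∑ j, min (deg yⱼ) cⱼ` of the lower bounds.
If a row `i₀` is still deficient, let `S` be the rows reachable from `i₀` by alternating walks
(to a column along a non-edge, back to a row along an edge). Toggling the entries along such a walk
would increase the coverage unless every reached column is full and every reached row has degree
at most its lower bound; hence each column has at least `min dⱼ |S|` edges into `S`, while `S`
carries fewer than `∑ i ∈ S, aᵢ` edges, violating the condition for `S`. Columns follow by
transposing, and for antitone lower bounds the conditions over all sets reduce to initial segments.
-/

section SingleIncrement

variable {ι : Type*} [DecidableEq ι]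

lemma add_single_le {r b : ι → ℕ} {k : ι} (hr : r ≤ b) (hk : r k < b k) :
    r + Pi.single k 1 ≤ b := by
  intro x
  by_cases hx : x = k
  · subst hx; simpa using hk
  · simpa [hx] using hr x

lemma sum_min_add_single [Fintype ι] (r a : ι → ℕ) (k : ι) :
    ∑ x, min ((r + Pi.single k 1 : ι → ℕ) x) (a x) =
      ∑ x, min (r x) (a x) + if r k < a k then 1 else 0 := by
  have hsummand : ∀ x, min ((r + Pi.single k 1 : ι → ℕ) x) (a x)
      = min (r x) (a x) + (Pi.single k (if r k < a k then 1 else 0) : ι → ℕ) x := by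
    intro x
    by_cases hx : x = k
    · subst hx; simp only [Pi.add_apply, Pi.single_eq_same]; split_ifs <;> omega
    · simp [hx]
  rw [sum_congr rfl fun x _ => hsummand x, sum_add_distrib, sum_pi_single']
  simp

end SingleIncrement

namespace BoolMatrix

variable {α β : Type*}

def rowDeg [Fintype β] (M : α → β → Bool) (i : α) : ℕ := ∑ j, if M i j then 1 else 0

def colDeg [Fintype α] (M : α → β → Bool) : β → ℕ := rowDeg (flip M)

lemma rowDeg_flip [Fintype α] (M : α → β → Bool) : rowDeg (flip M) = colDeg M := rfl

lemma sum_le_min_rowDeg_card [Fintype β] (M : α → β → Bool) (i : α) (T : Finset β) :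
    ∑ j ∈ T, (if M i j then 1 else 0) ≤ min (rowDeg M i) #T :=
  le_min (sum_le_sum_of_subset (subset_univ T)) (by simpa using card_filter_le T _)

section

variable [Fintype α] [Fintype β]

lemma sum_colDeg_le_sum_min_rowDeg (M : α → β → Bool) (T : Finset β) :
    ∑ j ∈ T, colDeg M j ≤ ∑ i, min (rowDeg M i) #T :=
  calc ∑ j ∈ T, colDeg M j = ∑ i, ∑ j ∈ T, (if M i j then 1 else 0) := sum_comm
    _ ≤ ∑ i, min (rowDeg M i) #T := sum_le_sum fun i _ => sum_le_min_rowDeg_card M i T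

theorem sum_le_sum_min_card {b : α → ℕ} {c : β → ℕ} {M : α → β → Bool}
    (hb : rowDeg M ≤ b) (hc : c ≤ colDeg M) (T : Finset β) :
    ∑ j ∈ T, c j ≤ ∑ i, min (b i) #T :=
  calc ∑ j ∈ T, c j ≤ ∑ j ∈ T, colDeg M j := sum_le_sum fun j _ => hc j
    _ ≤ ∑ i, min (rowDeg M i) #T := sum_colDeg_le_sum_min_rowDeg M T
    _ ≤ ∑ i, min (b i) #T := sum_le_sum fun i _ => min_le_min_right _ (hb i)

end

section Toggle

variable [DecidableEq α] [DecidableEq β]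

def toggle (M : α → β → Bool) (i : α) (j : β) : α → β → Bool :=
  fun p q => if p = i ∧ q = j then !M p q else M p q

@[simp] lemma toggle_apply_self (M : α → β → Bool) (i : α) (j : β) :
    toggle M i j i j = !M i j := by
  simp [toggle]

@[simp] lemma toggle_toggle (M : α → β → Bool) (i : α) (j : β) :
    toggle (toggle M i j) i j = M := by
  ext p q
  by_cases h : p = i ∧ q = j <;> simp [toggle, h]

lemma flip_toggle (M : α → β → Bool) (i : α) (j : β) :
    flip (toggle M i j) = toggle (flip M) j i := by
  ext q p
  simp [toggle, flip, and_comm]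

variable {M : α → β → Bool} {i : α} {j : β}

lemma rowDeg_toggle_of_false [Fintype β] (h : M i j = false) :
    rowDeg (toggle M i j) = rowDeg M + Pi.single i 1 := by
  ext p
  by_cases hp : p = i
  · subst hp
    have hsummand : ∀ q, (if toggle M p j p q then 1 else 0)
        = (if M p q then 1 else 0) + Pi.single j 1 q := by
      intro q
      by_cases hq : q = j
      · subst hq; simp [h]
      · simp [toggle, hq]
    simp [rowDeg, hsummand, sum_add_distrib]
  · simp [rowDeg, toggle, hp]

lemma rowDeg_toggle_of_true [Fintype β] (h : M i j = true) :
    rowDeg (toggle M i j) + Pi.single i 1 = rowDeg M := by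
  simpa using (rowDeg_toggle_of_false (M := toggle M i j) (i := i) (j := j) (by simp [h])).symm

lemma colDeg_toggle_of_false [Fintype α] (h : M i j = false) :
    colDeg (toggle M i j) = colDeg M + Pi.single j 1 := by
  rw [← rowDeg_flip, flip_toggle, rowDeg_toggle_of_false (M := flip M) h, rowDeg_flip]

lemma colDeg_toggle_of_true [Fintype α] (h : M i j = true) :
    colDeg (toggle M i j) + Pi.single j 1 = colDeg M := by
  rw [← rowDeg_flip, flip_toggle, rowDeg_toggle_of_true (M := flip M) h, rowDeg_flip]

end Toggle

section AlternatingWalks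

variable [DecidableEq α] [DecidableEq β] {M₀ : α → β → Bool} {i₀ : α}

variable (M₀ i₀) in
/-- `AltReach M₀ i₀ M x`: some walk from row `i₀` to `x` goes from rows to columns along
non-edges and from columns to rows along edges of the current matrix, which starts as `M₀` and has
each entry toggled as the walk crosses it; `M` is the matrix at the end. Tracking `M` makes
non-simple walks harmless. -/
inductive AltReach : (α → β → Bool) → α ⊕ β → Prop
  | refl : AltReach M₀ (.inl i₀)
  | add {M : α → β → Bool} {i : α} {j : β} :
      AltReach M (.inl i) → M i j = false → AltReach (toggle M i j) (.inr j)
  | remove {M : α → β → Bool} {i : α} {j : β} :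
      AltReach M (.inr j) → M i j = true → AltReach (toggle M i j) (.inl i)

variable (M₀ i₀) in
def Reachable (x : α ⊕ β) : Prop := ∃ M, AltReach M₀ i₀ M x

variable {M : α → β → Bool} {x : α ⊕ β} {i : α} {j : β}

theorem AltReach.reachable_of_ne (h : AltReach M₀ i₀ M x) (hij : M i j ≠ M₀ i j) :
    Reachable M₀ i₀ (.inl i) ∧ Reachable M₀ i₀ (.inr j) := by
  induction h with
  | refl => exact absurd rfl hij
  | @add M i' j' h hij' ih =>
    by_cases hc : i = i' ∧ j = j'
    · obtain ⟨rfl, rfl⟩ := hc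
      exact ⟨⟨M, h⟩, _, h.add hij'⟩
    · exact ih (by simpa [toggle, hc] using hij)
  | @remove M i' j' h hij' ih =>
    by_cases hc : i = i' ∧ j = j'
    · obtain ⟨rfl, rfl⟩ := hc
      exact ⟨⟨_, h.remove hij'⟩, M, h⟩
    · exact ih (by simpa [toggle, hc] using hij)

theorem Reachable.inr_of_inl (h : Reachable M₀ i₀ (.inl i)) (hij : M₀ i j = false) :
    Reachable M₀ i₀ (.inr j) := by
  obtain ⟨M, hM⟩ := h
  cases hMij : M i j
  · exact ⟨_, hM.add hMij⟩
  · exact (hM.reachable_of_ne (i := i) (j := j) (by simp [hMij, hij])).2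

theorem Reachable.inl_of_inr (h : Reachable M₀ i₀ (.inr j)) (hij : M₀ i j = true) :
    Reachable M₀ i₀ (.inl i) := by
  obtain ⟨M, hM⟩ := h
  cases hMij : M i j
  · exact (hM.reachable_of_ne (i := i) (j := j) (by simp [hMij, hij])).1
  · exact ⟨_, hM.remove hMij⟩

theorem AltReach.degrees [Fintype α] [Fintype β] (h : AltReach M₀ i₀ M x) :
    rowDeg M + x.elim (fun i => Pi.single i 1) (fun _ => 0) = rowDeg M₀ + Pi.single i₀ 1 ∧
      colDeg M = colDeg M₀ + x.elim (fun _ => 0) (fun j => Pi.single j 1) := by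
  induction h with
  | refl => simp
  | add _ hij ih =>
    simp only [Sum.elim_inl, Sum.elim_inr, add_zero] at ih ⊢
    rw [rowDeg_toggle_of_false hij, colDeg_toggle_of_false hij, ih.2]
    exact ⟨ih.1, rfl⟩
  | @remove _ _ j _ hij ih =>
    simp only [Sum.elim_inl, Sum.elim_inr, add_zero] at ih ⊢
    rw [rowDeg_toggle_of_true hij, ← ih.1]
    refine ⟨rfl, add_right_cancel (b := Pi.single j 1) ?_⟩
    rw [colDeg_toggle_of_true hij, ih.2]

end AlternatingWalks

section Augmentation

variable [Fintype α] [Fintype β]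

def coverage (a : α → ℕ) (c : β → ℕ) (M : α → β → Bool) : ℕ :=
  ∑ i, min (rowDeg M i) (a i) + ∑ j, min (colDeg M j) (c j)

def degBounded (b : α → ℕ) (d : β → ℕ) : Set (α → β → Bool) :=
  {M | rowDeg M ≤ b ∧ colDeg M ≤ d}

variable {a b : α → ℕ} {c d : β → ℕ} {M₀ : α → β → Bool}

lemma coverage_flip (a : α → ℕ) (c : β → ℕ) (M : α → β → Bool) :
    coverage c a (flip M) = coverage a c M :=
  add_comm _ _

lemma flip_mem_degBounded : flip M₀ ∈ degBounded d b ↔ M₀ ∈ degBounded b d :=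
  and_comm

lemma isMaxOn_coverage_flip (h : IsMaxOn (coverage a c) (degBounded b d) M₀) :
    IsMaxOn (coverage c a) (degBounded d b) (flip M₀) :=
  isMaxOn_iff.2 fun M hM => by
    rw [coverage_flip, ← coverage_flip c a M]
    exact isMaxOn_iff.1 h (flip M) (flip_mem_degBounded.2 hM)

variable [DecidableEq α] [DecidableEq β] {i₀ : α}

theorem rowDeg_le_of_reachable (hmax : IsMaxOn (coverage a c) (degBounded b d) M₀)
    (hM₀ : M₀ ∈ degBounded b d) (hdef : rowDeg M₀ i₀ < a i₀) (hab : a i₀ ≤ b i₀) {i : α}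
    (hi : Reachable M₀ i₀ (.inl i)) : rowDeg M₀ i ≤ a i := by
  obtain ⟨M, hM⟩ := hi
  obtain ⟨hrow, hcol⟩ : rowDeg M + Pi.single i 1 = rowDeg M₀ + Pi.single i₀ 1 ∧
      colDeg M = colDeg M₀ := by simpa using hM.degrees
  by_contra! hlt
  have hne : i ≠ i₀ := by rintro rfl; omega
  have hMi : a i ≤ rowDeg M i := by
    have := congrFun hrow i
    simp only [Pi.add_apply, Pi.single_eq_same, Pi.single_eq_of_ne hne] at this
    omega
  have hbounded : M ∈ degBounded b d :=
    ⟨fun p => (le_self_add.trans_eq (congrFun hrow p)).trans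
      (add_single_le hM₀.1 (hdef.trans_le hab) p), hcol ▸ hM₀.2⟩
  have hcov := sum_min_add_single (rowDeg M) a i
  rw [hrow, sum_min_add_single, if_pos hdef, if_neg (not_lt.2 hMi)] at hcov
  have := isMaxOn_iff.1 hmax M hbounded
  simp only [coverage, hcol] at this
  omega

theorem le_colDeg_of_reachable (hmax : IsMaxOn (coverage a c) (degBounded b d) M₀)
    (hM₀ : M₀ ∈ degBounded b d) (hdef : rowDeg M₀ i₀ < a i₀) (hab : a i₀ ≤ b i₀) {j : β}
    (hj : Reachable M₀ i₀ (.inr j)) : d j ≤ colDeg M₀ j := by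
  obtain ⟨M, hM⟩ := hj
  obtain ⟨hrow, hcol⟩ : rowDeg M = rowDeg M₀ + Pi.single i₀ 1 ∧
      colDeg M = colDeg M₀ + Pi.single j 1 := by simpa using hM.degrees
  by_contra! hlt
  have hbounded : M ∈ degBounded b d :=
    ⟨hrow ▸ add_single_le hM₀.1 (hdef.trans_le hab), hcol ▸ add_single_le hM₀.2 hlt⟩
  have hrowcov := sum_min_add_single (rowDeg M₀) a i₀
  have hcolcov := sum_min_add_single (colDeg M₀) c j
  rw [if_pos hdef, ← hrow] at hrowcov
  rw [← hcol] at hcolcov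
  have := isMaxOn_iff.1 hmax M hbounded
  simp only [coverage] at this
  omega

theorem exists_sum_min_card_lt (hmax : IsMaxOn (coverage a c) (degBounded b d) M₀)
    (hM₀ : M₀ ∈ degBounded b d) (hdef : rowDeg M₀ i₀ < a i₀) (hab : a i₀ ≤ b i₀) :
    ∃ S : Finset α, ∑ j, min (d j) #S < ∑ i ∈ S, a i := by
  classical
  set S : Finset α := {i | Reachable M₀ i₀ (.inl i)}
  have hS {i : α} : i ∈ S ↔ Reachable M₀ i₀ (.inl i) := by simp [S]
  have hcut (j : β) : min (d j) #S ≤ ∑ i ∈ S, if M₀ i j then 1 else 0 := by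
    by_cases hj : Reachable M₀ i₀ (.inr j)
    · have hfull : ∑ i ∈ S, (if M₀ i j then 1 else 0) = colDeg M₀ j :=
        sum_subset (subset_univ S) fun i _ hi => by
          cases h : M₀ i j
          · rfl
          · exact absurd (hS.2 (hj.inl_of_inr h)) hi
      rw [hfull]
      exact (min_le_left _ _).trans (le_colDeg_of_reachable hmax hM₀ hdef hab hj)
    · have hall : ∑ i ∈ S, (if M₀ i j then 1 else 0) = #S := by
        rw [card_eq_sum_ones]
        refine sum_congr rfl fun i hi => ?_
        cases h : M₀ i j
        · exact absurd ((hS.1 hi).inr_of_inl h) hj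
        · rfl
      rw [hall]
      exact min_le_right _ _
  refine ⟨S, ?_⟩
  calc ∑ j, min (d j) #S ≤ ∑ j, ∑ i ∈ S, (if M₀ i j then 1 else 0) := sum_le_sum fun j _ => hcut j
    _ = ∑ i ∈ S, rowDeg M₀ i := sum_comm
    _ < ∑ i ∈ S, a i :=
      sum_lt_sum (fun i hi => rowDeg_le_of_reachable hmax hM₀ hdef hab (hS.1 hi))
        ⟨i₀, hS.2 ⟨M₀, .refl⟩, hdef⟩

end Augmentation

section DegreeIntervals

variable [Fintype α] [Fintype β] {a b : α → ℕ} {c d : β → ℕ}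

theorem exists_degree_bounds_of_forall_sum_le (hab : a ≤ b) (hcd : c ≤ d)
    (hrow : ∀ S : Finset α, ∑ i ∈ S, a i ≤ ∑ j, min (d j) #S)
    (hcol : ∀ T : Finset β, ∑ j ∈ T, c j ≤ ∑ i, min (b i) #T) :
    ∃ M : α → β → Bool, (∀ i, a i ≤ rowDeg M i ∧ rowDeg M i ≤ b i) ∧
      ∀ j, c j ≤ colDeg M j ∧ colDeg M j ≤ d j := by
  classical
  obtain ⟨M₀, hM₀, hmax⟩ := Set.exists_max_image (degBounded b d) (coverage a c) (Set.toFinite _)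
    ⟨fun _ _ => false, fun _ => by simp [rowDeg], fun _ => by simp [colDeg, rowDeg, flip]⟩
  replace hmax : IsMaxOn (coverage a c) (degBounded b d) M₀ := isMaxOn_iff.2 hmax
  have hrowDeg (i : α) : a i ≤ rowDeg M₀ i := by
    by_contra! hi
    obtain ⟨S, hS⟩ := exists_sum_min_card_lt hmax hM₀ hi (hab i)
    exact (hrow S).not_gt hS
  have hcolDeg (j : β) : c j ≤ colDeg M₀ j := by
    by_contra! hj
    obtain ⟨T, hT⟩ :=
      exists_sum_min_card_lt (isMaxOn_coverage_flip hmax) (flip_mem_degBounded.2 hM₀) hj (hcd j)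
    exact (hcol T).not_gt hT
  exact ⟨M₀, fun i => ⟨hrowDeg i, hM₀.1 i⟩, fun j => ⟨hcolDeg j, hM₀.2 j⟩⟩

theorem exists_degree_bounds_iff (hab : a ≤ b) (hcd : c ≤ d) :
    (∃ M : α → β → Bool, (∀ i, a i ≤ rowDeg M i ∧ rowDeg M i ≤ b i) ∧
      ∀ j, c j ≤ colDeg M j ∧ colDeg M j ≤ d j) ↔
    (∀ T : Finset β, ∑ j ∈ T, c j ≤ ∑ i, min (b i) #T) ∧
      ∀ S : Finset α, ∑ i ∈ S, a i ≤ ∑ j, min (d j) #S :=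
  ⟨fun ⟨M, hrow, hcol⟩ =>
    ⟨sum_le_sum_min_card (fun i => (hrow i).2) (fun j => (hcol j).1),
      sum_le_sum_min_card (M := flip M) (fun j => (hcol j).2) (fun i => (hrow i).1)⟩,
    fun ⟨hcol, hrow⟩ => exists_degree_bounds_of_forall_sum_le hab hcd hrow hcol⟩

end DegreeIntervals

end BoolMatrix

section AntitoneSums

variable {ι N : Type*} [AddCommMonoid N] [LinearOrder N] [AddLeftMono N]

theorem Finset.sum_le_sum_of_card_eq_of_forall_le {s t : Finset ι} {f : ι → N}
    (hst : #s = #t) (h : ∀ x ∈ s, ∀ y ∈ t, f x ≤ f y) : ∑ x ∈ s, f x ≤ ∑ y ∈ t, f y := by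
  obtain rfl | hs := s.eq_empty_or_nonempty
  · obtain rfl : t = ∅ := by simpa using hst.symm
    rfl
  obtain ⟨x₀, hx₀, hmax⟩ := s.exists_max_image f hs
  calc ∑ x ∈ s, f x ≤ #s • f x₀ := sum_le_card_nsmul s f _ hmax
    _ = #t • f x₀ := by rw [hst]
    _ ≤ ∑ y ∈ t, f y := card_nsmul_le_sum t f _ (h x₀ hx₀)

theorem Antitone.sum_le_sum_val_lt_card {n : ℕ} {c : Fin n → N} (hc : Antitone c)
    (T : Finset (Fin n)) : ∑ j ∈ T, c j ≤ ∑ j : Fin n, if (j : ℕ) < #T then c j else 0 := by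
  rw [← sum_filter]
  set P : Finset (Fin n) := {j | (j : ℕ) < #T}
  have hcard : #P = #T := by
    simpa [P, Fin.card_filter_val_lt] using T.card_le_univ.trans_eq (Fintype.card_fin n)
  have hswap : ∑ j ∈ T \ P, c j ≤ ∑ j ∈ P \ T, c j :=
    sum_le_sum_of_card_eq_of_forall_le (card_sdiff_comm hcard.symm) fun x hx y hy => by
      simp only [P, mem_sdiff, mem_filter, mem_univ, true_and] at hx hy
      exact hc (Fin.le_def.2 (by omega))
  calc ∑ j ∈ T, c j = ∑ j ∈ T ∩ P, c j + ∑ j ∈ T \ P, c j := (sum_inter_add_sum_sdiff ..).symm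
    _ ≤ ∑ j ∈ T ∩ P, c j + ∑ j ∈ P \ T, c j := add_le_add le_rfl hswap
    _ = ∑ j ∈ P, c j := by rw [inter_comm, sum_inter_add_sum_sdiff]

theorem Antitone.forall_sum_le_iff_forall_prefix {n : ℕ} {c : Fin n → ℕ} (hc : Antitone c)
    (g : ℕ → ℕ) :
    (∀ T : Finset (Fin n), ∑ j ∈ T, c j ≤ g #T) ↔
      ∀ t, 1 ≤ t → t ≤ n → (∑ i : Fin n, if (i : ℕ) < t then c i else 0) ≤ g t := by
  refine ⟨fun h t _ ht => ?_, fun h T => ?_⟩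
  · simpa [← sum_filter, Fin.card_filter_val_lt, ht] using h {i | (i : ℕ) < t}
  · obtain hT | hT := Nat.eq_zero_or_pos #T
    · simp [card_eq_zero.1 hT]
    · exact (hc.sum_le_sum_val_lt_card T).trans
        (h _ hT (T.card_le_univ.trans_eq (Fintype.card_fin n)))

end AntitoneSums

/-- Theorem of Tripathi, Garg and Goel. -/
theorem tripathi_garg_goel {m n : ℕ} (a b : Fin m → ℕ) (c d : Fin n → ℕ)
    (ha : Antitone a) (hc : Antitone c)
    (hab : ∀ i, a i ≤ b i) (hcd : ∀ j, c j ≤ d j) :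
    IntervalBigraphic a b c d ↔
      ((∀ t : ℕ, 1 ≤ t → t ≤ n →
          (∑ i : Fin n, if (i : ℕ) < t then c i else 0) ≤ ∑ j : Fin m, min (b j) t) ∧
       (∀ s : ℕ, 1 ≤ s → s ≤ m →
          (∑ i : Fin m, if (i : ℕ) < s then a i else 0) ≤ ∑ j : Fin n, min (d j) s)) :=
  (BoolMatrix.exists_degree_bounds_iff hab hcd).trans
    (and_congr (hc.forall_sum_le_iff_forall_prefix fun t => ∑ i, min (b i) t)
      (ha.forall_sum_le_iff_forall_prefix fun s => ∑ j, min (d j) s))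
end

section
/- Let L1 = ([a_1,b_1],...,[a_m,b_m]) and L2 = ([c_1,d_1],...,[c_n,d_n]) be sequences of intervals of nonnegative integers with b_1 ≥ ... ≥ b_m and d_1 ≥ ... ≥ d_n. Suppose that for each k with 1 ≤ k ≤ m, Σ_{i=1}^k b_i ≤ Σ_{i=1}^n min{c_i, k}, and for each l with 1 ≤ l ≤ n, Σ_{i=1}^l d_i ≤ Σ_{i=1}^m min{a_i, l}. Then every pair (P;Q) with P = (p_1,...,p_m), Q = (q_1,...,q_n), a_i ≤ p_i ≤ b_i for 1 ≤ i ≤ m, c_j ≤ q_j ≤ d_j for 1 ≤ j ≤ n, and Σ_{i=1}^m p_i = Σ_{j=1}^n q_j, is bigraphic. -/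
/-!
Since `b` is antitone, the `k` largest upper bounds are `b₁, …, bₖ`, so the hypothesis on `b` and
`c` yields the Gale–Ryser inequalities `∑_{i ∈ S} pᵢ ≤ ∑ⱼ min(qⱼ, |S|)` for every set `S` of rows.
These suffice (with equal totals), by a Havel–Hakimi style induction: join a row of maximal degree
`k` to `k` columns of largest degree and check that the inequalities survive for the rest.
-/

open Finset

section TopValues

variable {ι : Type*} [DecidableEq ι]

theorem exists_card_eq_and_apply_le_of_mem_of_notMem [Fintype ι] {α : Type*} [LinearOrder α]
    (f : ι → α) {k : ℕ} (hk : k ≤ Fintype.card ι) :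
    ∃ T : Finset ι, #T = k ∧ ∀ j ∈ T, ∀ j' ∉ T, f j' ≤ f j := by
  induction k with
  | zero => exact ⟨∅, rfl, by simp⟩
  | succ k ih =>
    obtain ⟨T, hTk, hT⟩ := ih (by omega)
    have hTc : Tᶜ.Nonempty := by rw [← card_pos, card_compl]; omega
    obtain ⟨x, hx, hx_max⟩ := Tᶜ.exists_max_image f hTc
    rw [mem_compl] at hx
    refine ⟨insert x T, by rw [card_insert_of_notMem hx, hTk], fun j hj j' hj' => ?_⟩
    rw [mem_insert, not_or] at hj'
    rcases mem_insert.mp hj with rfl | hj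
    · exact hx_max j' (mem_compl.mpr hj'.2)
    · exact hT j hj j' hj'.2

theorem sum_le_sum_of_card_le_of_apply_le {f : ι → ℕ} {S T : Finset ι}
    (hT : ∀ j ∈ T, ∀ j' ∉ T, f j' ≤ f j) (hcard : #S ≤ #T) :
    ∑ i ∈ S, f i ≤ ∑ i ∈ T, f i := by
  rw [← sum_inter_add_sum_sdiff S T, ← sum_inter_add_sum_sdiff T S, inter_comm T S]
  refine Nat.add_le_add_left ?_ _
  have hsdiff : #(S \ T) ≤ #(T \ S) := by
    have := card_sdiff_add_card_inter S T
    have := card_sdiff_add_card_inter T S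
    rw [inter_comm T S] at *
    omega
  rcases (T \ S).eq_empty_or_nonempty with hTS | hTS
  · rw [hTS, card_empty, Nat.le_zero, card_eq_zero] at hsdiff
    rw [hTS, hsdiff]
  obtain ⟨y, hy, hy_min⟩ := (T \ S).exists_min_image f hTS
  rw [mem_sdiff] at hy
  calc ∑ i ∈ S \ T, f i ≤ #(S \ T) • f y :=
        sum_le_card_nsmul _ _ _ fun x hx => hT y hy.1 x (mem_sdiff.mp hx).2
    _ ≤ #(T \ S) • f y := by gcongr
    _ ≤ ∑ i ∈ T \ S, f i := card_nsmul_le_sum _ _ _ hy_min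

theorem lt_of_mem_of_card_le_card_filter_lt [Fintype ι] {α : Type*} [LinearOrder α] {f : ι → α}
    {T : Finset ι} (c : α) (hT : ∀ j ∈ T, ∀ j' ∉ T, f j' ≤ f j)
    (hcard : #T ≤ #{j | c < f j}) : ∀ j ∈ T, c < f j := by
  by_contra! ⟨j, hj, hjc⟩
  have hsub : ({j' | c < f j'} : Finset ι) ⊆ T.erase j := by
    intro x hx
    rw [mem_filter] at hx
    have hxT : x ∈ T := by
      by_contra hxT
      exact (hx.2.trans_le ((hT j hj x hxT).trans hjc)).false
    exact mem_erase.mpr ⟨fun h => (h ▸ hx.2).not_ge hjc, hxT⟩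
  have := card_le_card hsub
  rw [card_erase_of_mem hj] at this
  have := card_pos.mpr ⟨j, hj⟩
  omega

end TopValues

theorem sum_min_one_eq_card_filter_pos {ι : Type*} (s : Finset ι) (f : ι → ℕ) :
    ∑ j ∈ s, min (f j) 1 = #{j ∈ s | 0 < f j} := by
  rw [card_filter]
  exact sum_congr rfl fun j _ => by split_ifs <;> omega

variable {m n : ℕ}

theorem sum_le_sum_min_succAbove {p : Fin (m + 1) → ℕ} {q q' : Fin n → ℕ} {i₀ : Fin (m + 1)}
    {T : Finset (Fin n)} (hp : ∀ i, p i ≤ p i₀) (hT : #T = p i₀)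
    (hT_top : ∀ j ∈ T, ∀ j' ∉ T, q j' ≤ q j) (hq : ∀ j, q j = q' j + if j ∈ T then 1 else 0)
    (hGR : ∀ S : Finset (Fin (m + 1)), ∑ i ∈ S, p i ≤ ∑ j, min (q j) #S)
    (S : Finset (Fin m)) : ∑ i ∈ S, p (i₀.succAbove i) ≤ ∑ j, min (q' j) #S := by
  -- Either all of `T` keeps degree `≥ |S|` in `q'`, and `|S| • p i₀` already suffices, or every
  -- column outside `T` has degree `≤ |S|`, and the inequality for `S ∪ {i₀}` transfers.
  by_cases hbig : ∃ j₀ ∉ T, #S + 1 ≤ q j₀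
  · obtain ⟨j₀, hj₀T, hj₀⟩ := hbig
    have hT_big : ∀ j ∈ T, #S ≤ q' j := fun j hj => by
      have := (hq j).symm.trans_ge (hj₀.trans (hT_top j hj j₀ hj₀T))
      simpa [hj] using this
    calc ∑ i ∈ S, p (i₀.succAbove i) ≤ #S • p i₀ := sum_le_card_nsmul _ _ _ fun i _ => hp _
      _ = #T • #S := by rw [hT, smul_eq_mul, smul_eq_mul, mul_comm]
      _ ≤ ∑ j ∈ T, min (q' j) #S := card_nsmul_le_sum _ _ _ fun j hj => le_min (hT_big j hj) le_rfl
      _ ≤ ∑ j, min (q' j) #S := sum_le_sum_of_subset (subset_univ T)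
  · push Not at hbig
    have hi₀ : i₀ ∉ S.map (Fin.succAboveEmb i₀) := by
      simp [Fin.succAbove_ne]
    have hcol : ∀ j, min (q j) (#S + 1) = (if j ∈ T then 1 else 0) + min (q' j) #S := by
      intro j
      have h := hq j
      by_cases hj : j ∈ T
      · simp only [hj, if_true] at h ⊢
        omega
      · have := hbig j hj
        simp only [hj, if_false] at h ⊢
        omega
    have := hGR (insert i₀ (S.map (Fin.succAboveEmb i₀)))
    rw [card_insert_of_notMem hi₀, card_map, sum_insert hi₀, sum_map, sum_congr rfl fun j _ => hcol j, sum_add_distrib,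
      sum_boole, filter_mem_eq_inter, univ_inter, Nat.cast_id, hT] at this
    simpa using this

theorem Bigraphic.of_succAbove {p : Fin (m + 1) → ℕ} {q q' : Fin n → ℕ} (i₀ : Fin (m + 1))
    (T : Finset (Fin n)) (hT : #T = p i₀) (hq : ∀ j, q j = q' j + if j ∈ T then 1 else 0)
    (h : Bigraphic (fun i => p (i₀.succAbove i)) q') : Bigraphic p q := by
  obtain ⟨M, hrow, hcol⟩ := h
  refine ⟨i₀.insertNth (fun j => decide (j ∈ T)) M, fun i => ?_, fun j => ?_⟩
  · induction i using Fin.succAboveCases i₀ with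
    | x => simp [hT]
    | p i => simpa using hrow i
  · rw [Fin.sum_univ_succAbove _ i₀, hq j]
    simp only [Fin.insertNth_apply_same, Fin.insertNth_apply_succAbove, hcol, decide_eq_true_eq]
    omega

theorem Bigraphic.of_sum_le_sum_min (p : Fin m → ℕ) (q : Fin n → ℕ) (hsum : ∑ i, p i = ∑ j, q j)
    (hGR : ∀ S : Finset (Fin m), ∑ i ∈ S, p i ≤ ∑ j, min (q j) #S) : Bigraphic p q := by
  induction m generalizing q with
  | zero =>
    refine ⟨finZeroElim, finZeroElim, fun j => ?_⟩
    rw [Fin.sum_univ_zero, eq_comm, sum_eq_zero_iff] at hsum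
    simp [hsum j (mem_univ j)]
  | succ m ih =>
    obtain ⟨i₀, -, hi₀⟩ := univ.exists_max_image p univ_nonempty
    have hk : p i₀ ≤ #{j | 0 < q j} := by
      simpa [sum_min_one_eq_card_filter_pos] using hGR {i₀}
    obtain ⟨T, hT, hT_top⟩ :=
      exists_card_eq_and_apply_le_of_mem_of_notMem q (hk.trans (card_le_univ _))
    have hT_pos := lt_of_mem_of_card_le_card_filter_lt 0 hT_top (hT ▸ hk)
    set q' := fun j => q j - if j ∈ T then 1 else 0
    have hq : ∀ j, q j = q' j + if j ∈ T then 1 else 0 := fun j => by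
      by_cases hj : j ∈ T
      · have := hT_pos j hj
        simp only [q', hj, if_true]
        omega
      · simp [q', hj]
    have hsum' : ∑ i, p (i₀.succAbove i) = ∑ j, q' j := by
      have := Fin.sum_univ_succAbove p i₀
      rw [sum_congr rfl fun j _ => hq j, sum_add_distrib, sum_boole] at hsum
      simp only [filter_mem_eq_inter, univ_inter, Nat.cast_id, hT] at hsum
      omega
    exact .of_succAbove i₀ T hT hq <| ih _ q' hsum' <|
      sum_le_sum_min_succAbove (fun i => hi₀ i (mem_univ i)) hT hT_top hq hGR

theorem thm_1_3_general {m n : ℕ} (a b : Fin m → ℕ) (c d : Fin n → ℕ)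
    (hb : Antitone b)
    (h2 : ∀ k : ℕ, 1 ≤ k → k ≤ m →
      (∑ i : Fin m, if (i : ℕ) < k then b i else 0) ≤ ∑ i : Fin n, min (c i) k) :
    ∀ (p : Fin m → ℕ) (q : Fin n → ℕ),
      (∀ i, a i ≤ p i ∧ p i ≤ b i) → (∀ j, c j ≤ q j ∧ q j ≤ d j) →
      (∑ i, p i) = (∑ j, q j) → Bigraphic p q := by
  intro p q hp hq hsum
  refine .of_sum_le_sum_min p q hsum fun S => ?_
  rcases S.eq_empty_or_nonempty with rfl | hS
  · simp
  have hSm : #S ≤ m := (card_le_univ S).trans_eq (Fintype.card_fin m)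
  set I : Finset (Fin m) := {i | (i : ℕ) < #S}
  have hI_top : ∀ i ∈ I, ∀ i' ∉ I, b i' ≤ b i := by
    intro i hi i' hi'
    simp only [I, mem_filter, mem_univ, true_and, not_lt] at hi hi'
    exact hb (Fin.le_def.mpr (by omega))
  calc ∑ i ∈ S, p i ≤ ∑ i ∈ S, b i := sum_le_sum fun i _ => (hp i).2
    _ ≤ ∑ i ∈ I, b i :=
        sum_le_sum_of_card_le_of_apply_le hI_top (by simp [I, Fin.card_filter_val_lt, hSm])
    _ = ∑ i : Fin m, if (i : ℕ) < #S then b i else 0 := sum_filter _ _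
    _ ≤ ∑ j, min (c j) #S := h2 _ hS.card_pos hSm
    _ ≤ ∑ j, min (q j) #S := sum_le_sum fun j _ => min_le_min_right _ (hq j).1

/-- Theorem 1.3: optimal sufficient condition for a forcibly bigraphic pair. -/
theorem thm_1_3 {m n : ℕ} (a b : Fin m → ℕ) (c d : Fin n → ℕ)
    (hb : Antitone b) (hd : Antitone d)
    (hab : ∀ i, a i ≤ b i) (hcd : ∀ j, c j ≤ d j)
    (h2 : ∀ k : ℕ, 1 ≤ k → k ≤ m →
      (∑ i : Fin m, if (i : ℕ) < k then b i else 0) ≤ ∑ i : Fin n, min (c i) k)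
    (h3 : ∀ l : ℕ, 1 ≤ l → l ≤ n →
      (∑ i : Fin n, if (i : ℕ) < l then d i else 0) ≤ ∑ i : Fin m, min (a i) l) :
    ∀ (p : Fin m → ℕ) (q : Fin n → ℕ),
      (∀ i, a i ≤ p i ∧ p i ≤ b i) → (∀ j, c j ≤ q j ∧ q j ≤ d j) →
      (∑ i, p i) = (∑ j, q j) → Bigraphic p q :=
  thm_1_3_general a b c d hb h2
end

section
/- For the interval sequences L1 = ([2,3],[1,2]) and L2 = ([1,2],[0,1]), every pair (P;Q) with P = (p_1,p_2), Q = (q_1,q_2), 2 ≤ p_1 ≤ 3, 1 ≤ p_2 ≤ 2, 1 ≤ q_1 ≤ 2, 0 ≤ q_2 ≤ 1, and p_1 + p_2 = q_1 + q_2 is bigraphic; nevertheless the inequality Σ_{i=1}^k b_i ≤ Σ_{i=1}^2 min{c_i, k} fails for both k = 1 and k = 2, where b = (3,2) and c = (1,0). -/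
open Finset

/-- Counterexample 1: the sufficient condition of Theorem 1.3 is not necessary. -/
theorem counterexample_1 :
    (∀ (p q : Fin 2 → ℕ),
        (2 ≤ p 0 ∧ p 0 ≤ 3) → (1 ≤ p 1 ∧ p 1 ≤ 2) →
        (1 ≤ q 0 ∧ q 0 ≤ 2) → (q 1 ≤ 1) →
        p 0 + p 1 = q 0 + q 1 → Bigraphic p q) ∧
    ¬ (3 ≤ min 1 1 + min 0 1) ∧ ¬ (3 + 2 ≤ min 1 2 + min 0 2) := by
  refine ⟨?_, by norm_num, by norm_num⟩
  intro p q hp0 hp1 hq0 hq1 hsum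
  have e : p 0 = 2 ∧ p 1 = 1 ∧ q 0 = 2 ∧ q 1 = 1 := by omega
  exact ⟨![![true, true], ![true, false]], by
    intro i; fin_cases i <;> simp [Fin.sum_univ_two, e.1, e.2.1] <;> decide, by
    intro j; fin_cases j <;> simp [Fin.sum_univ_two, e.2.2.1, e.2.2.2] <;> decide⟩
end

section
/- For the interval sequences L1 = ([1,3],[2,3]) and L2 = ([1,2],[0,2]), the inequalities Σ_{i=1}^k b_i ≤ Σ_{i=1}^2 min{c_i, k} + |Σ b_i − Σ c_i| for k = 1, 2 and Σ_{i=1}^l d_i ≤ Σ_{i=1}^2 min{a_i, l} + |Σ d_i − Σ a_i| for l = 1, 2 all hold (with a = (1,2), b = (3,3), c = (1,0), d = (2,2)); nevertheless the pair (P;Q) with P = (1,3) and Q = (2,2) satisfies a_i ≤ p_i ≤ b_i, c_j ≤ q_j ≤ d_j, and Σ p_i = Σ q_j but is not bigraphic. -/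
open Finset

/-- Counterexample 2: the necessary condition of Theorem 1.4 is not sufficient.
Here a = (1,2), b = (3,3), c = (1,0), d = (2,2). -/
theorem counterexample_2 :
    ((3 : ℤ) ≤ min 1 1 + min 0 1 + |(3 + 3 : ℤ) - (1 + 0)|) ∧
    ((3 + 3 : ℤ) ≤ min 1 2 + min 0 2 + |(3 + 3 : ℤ) - (1 + 0)|) ∧
    ((2 : ℤ) ≤ min 1 1 + min 2 1 + |(2 + 2 : ℤ) - (1 + 2)|) ∧
    ((2 + 2 : ℤ) ≤ min 1 2 + min 2 2 + |(2 + 2 : ℤ) - (1 + 2)|) ∧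
    ((1 : ℕ) ≤ 1 ∧ 1 ≤ 3) ∧ (2 ≤ 3 ∧ 3 ≤ 3) ∧ (1 ≤ 2 ∧ 2 ≤ 2) ∧ ((2:ℕ) ≤ 2) ∧
    (1 + 3 = 2 + 2) ∧
    ¬ Bigraphic ![1, 3] ![2, 2] := by
  refine ⟨by norm_num, by norm_num, by norm_num, by norm_num, by norm_num,
    by norm_num, by norm_num, le_refl _, rfl, ?_⟩
  rintro ⟨M, h1, h2⟩
  have h := h1 1
  rw [Fin.sum_univ_two] at h
  rcases hM0 : M 1 0 <;> rcases hM1 : M 1 1 <;> simp [hM0, hM1] at h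
end

section
/- Let d_1 ≥ ... ≥ d_n ≥ 0 and a'_1 ≥ ... ≥ a'_m ≥ 0 be integers, with t := Σ_{i=1}^n d_i − Σ_{i=1}^m a'_i satisfying m + n − r < t ≤ n for some r with m ≤ r ≤ n. Suppose the pair (P;Q) with P = (a'_1+1,...,a'_m+1) and Q = (d_1,...,d_{m+n−t}, d_{m+n−t+1}−1,...,d_n−1) is bigraphic. Then Σ_{i=1}^r d_i ≤ Σ_{i=1}^m min{a'_i, r} + r + t − n, and consequently Σ_{i=1}^r d_i ≤ Σ_{i=1}^m min{a'_i, r} + t. -/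
open Finset

lemma count_aux {n : ℕ} (P : ℕ → Prop) [DecidablePred P] :
    (∑ j : Fin n, if P (j : ℕ) then (1:ℕ) else 0)
      = ((Finset.range n).filter P).card := by
  rw [Fin.sum_univ_eq_sum_range (fun j => if P j then (1:ℕ) else 0)]
  exact (Finset.card_filter _ _).symm

/-- Subcase 2.3 of the proof of Theorem 1.4. -/
theorem subcase_2_3 {m n : ℕ} (a' : Fin m → ℕ) (d : Fin n → ℕ) (t r : ℕ)
    (ha' : Antitone a') (hd : Antitone d)
    (ht : (∑ i, a' i) + t = ∑ i, d i)
    (hmr : m ≤ r) (hrn : r ≤ n) (htlow : m + n - r < t) (htn : t ≤ n)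
    (hbig : Bigraphic (fun i => a' i + 1)
      (fun j => if (j : ℕ) < m + n - t then d j else d j - 1)) :
    (∑ i : Fin n, if (i : ℕ) < r then d i else 0) ≤
        (∑ i : Fin m, min (a' i) r) + (r + t - n) ∧
    (∑ i : Fin n, if (i : ℕ) < r then d i else 0) ≤
        (∑ i : Fin m, min (a' i) r) + t := by
  obtain ⟨M, hp, hq⟩ := hbig
  -- Gale–Ryser-type inequality from the matrix
  have key : (∑ j : Fin n, if (j : ℕ) < r then
        (if (j : ℕ) < m + n - t then d j else d j - 1) else 0)
      ≤ ∑ i : Fin m, min (a' i + 1) r := by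
    have e1 : (∑ j : Fin n, if (j : ℕ) < r then
          (if (j : ℕ) < m + n - t then d j else d j - 1) else 0)
        = ∑ i : Fin m, ∑ j : Fin n, (if (j : ℕ) < r then (if M i j then 1 else 0) else 0) := by
      rw [Finset.sum_comm]
      refine Finset.sum_congr rfl fun j _ => ?_
      have hqj : (∑ i : Fin m, if M i j then (1:ℕ) else 0)
          = (if (j : ℕ) < m + n - t then d j else d j - 1) := hq j
      rw [← hqj]
      split
      · rfl
      · simp
    rw [e1]
    refine Finset.sum_le_sum fun i _ => ?_
    refine le_min ?_ ?_
    · have hpi : (∑ j : Fin n, if M i j then (1:ℕ) else 0) = a' i + 1 := hp i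
      rw [← hpi]
      exact Finset.sum_le_sum fun j _ => by split <;> simp
    · calc (∑ j : Fin n, if (j : ℕ) < r then (if M i j then 1 else 0) else 0)
          ≤ ∑ j : Fin n, (if (j : ℕ) < r then 1 else 0) := by
            refine Finset.sum_le_sum fun j _ => ?_
            split <;> [split <;> simp; simp]
        _ = ((Finset.range n).filter (fun x => x < r)).card := count_aux (fun x => x < r)
        _ = r := by
            rw [show (Finset.range n).filter (fun x => x < r) = Finset.range r by
              ext x; simp; omega, Finset.card_range]
  have count2 : (∑ j : Fin n, if m + n - t ≤ (j : ℕ) ∧ (j : ℕ) < r then (1:ℕ) else 0)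
      = r - (m + n - t) := by
    rw [count_aux (fun x => m + n - t ≤ x ∧ x < r)]
    rw [show (Finset.range n).filter (fun x => m + n - t ≤ x ∧ x < r)
        = Finset.Ico (m + n - t) r by ext x; simp [Finset.mem_Ico]; omega]
    rw [Nat.card_Ico]
  have A : (∑ i : Fin n, if (i : ℕ) < r then d i else 0)
      ≤ (∑ j : Fin n, if (j : ℕ) < r then
          (if (j : ℕ) < m + n - t then d j else d j - 1) else 0)
        + (∑ j : Fin n, if m + n - t ≤ (j : ℕ) ∧ (j : ℕ) < r then (1:ℕ) else 0) := by
    rw [← Finset.sum_add_distrib]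
    refine Finset.sum_le_sum fun j _ => ?_
    split_ifs <;> omega
  have B : (∑ i : Fin m, min (a' i + 1) r) ≤ (∑ i : Fin m, min (a' i) r) + m := by
    calc (∑ i : Fin m, min (a' i + 1) r) ≤ ∑ i : Fin m, (min (a' i) r + 1) :=
          Finset.sum_le_sum fun i _ => by omega
      _ = (∑ i : Fin m, min (a' i) r) + m := by
          rw [Finset.sum_add_distrib]; simp
  have hfin : (∑ i : Fin n, if (i : ℕ) < r then d i else 0)
      ≤ (∑ i : Fin m, min (a' i) r) + m + (r - (m + n - t)) := by
    calc (∑ i : Fin n, if (i : ℕ) < r then d i else 0)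
        ≤ (∑ j : Fin n, if (j : ℕ) < r then
            (if (j : ℕ) < m + n - t then d j else d j - 1) else 0) + (r - (m + n - t)) := by
          rw [← count2]; exact A
      _ ≤ (∑ i : Fin m, min (a' i + 1) r) + (r - (m + n - t)) := by omega
      _ ≤ (∑ i : Fin m, min (a' i) r) + m + (r - (m + n - t)) := by omega
  constructor <;> omega
end
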